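/- (Existence and uniqueness for the concurrent delay model.) If τ₀ > 0, the coefficient functions α, β₀, β₁, …, β_J are continuous on T = [t₀, T₁], Z is p-th moment continuous, each U_j is p-th moment continuous on [t₀ − τ_j, T₁ − τ_j], and the initial condition process g is p-th moment continuous on [t₀ − τ₀, t₀], then the random delay differential equation X′(t) = α(t) + β₀(t)X(t − τ₀) + Σ_j β_j(t)U_j(t − τ_j) + Z(t) on [t₀, T₁], with X(t) = g(t) on [t₀ − τ₀, t₀], has a unique solution in the Lp sense. -/

import Mathlib

open MeasureTheory Set Filter
open scoped ENNReal BigOperators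

/-! Method of steps. The problem `X' t = F t (X (t - τ₀))` on `[t₀, T₁]`, `X = g` on
`[t₀ - τ₀, t₀]`, is equivalent, for continuous `X`, to the fixed-point equation `X = Φ X` with
`Φ X t = g (min t t₀) + ∫ s in t₀..max t t₀, F s (X (s - τ₀))`. Since `(Φ X) t` only depends on
`X` up to time `t - τ₀`, the Picard iterates of `Φ` stabilise on `[t₀ - τ₀, t₀ + n τ₀]` after
`n + 1` steps, and two fixed points agree on each of these intervals in turn. Because `τ₀ > 0`,
finitely many steps cover `[t₀, T₁]`. -/

section DelayEquation

theorem continuousOn_comp_delay {E E' : Type*} [TopologicalSpace E] [TopologicalSpace E']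
    {t₀ T₁ τ₀ : ℝ} {F : ℝ → E → E'} {X : ℝ → E} (hτ₀ : 0 ≤ τ₀)
    (hF : ContinuousOn (Function.uncurry F) (Icc t₀ T₁ ×ˢ univ))
    (hX : ContinuousOn X (Icc (t₀ - τ₀) T₁)) :
    ContinuousOn (fun s => F s (X (s - τ₀))) (Icc t₀ T₁) := by
  have hshift : MapsTo (fun s => s - τ₀) (Icc t₀ T₁) (Icc (t₀ - τ₀) T₁) :=
    fun s hs => ⟨by linarith [hs.1], by linarith [hs.2]⟩
  refine hF.comp (continuousOn_id.prodMk (hX.comp (by fun_prop) hshift)) ?_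
  exact fun s hs => ⟨hs, mem_univ _⟩

variable {E : Type*} [NormedAddCommGroup E] [NormedSpace ℝ E]
  {t₀ T₁ τ₀ : ℝ} {F : ℝ → E → E} {g X Y : ℝ → E}

def IsDelaySolution (t₀ T₁ τ₀ : ℝ) (F : ℝ → E → E) (g X : ℝ → E) : Prop :=
  ContinuousOn X (Icc (t₀ - τ₀) T₁) ∧
    (∀ t ∈ Icc t₀ T₁, HasDerivWithinAt X (F t (X (t - τ₀))) (Icc t₀ T₁) t) ∧
    ∀ t ∈ Icc (t₀ - τ₀) t₀, X t = g t

noncomputable def delayPicardMap (t₀ τ₀ : ℝ) (F : ℝ → E → E) (g X : ℝ → E) (t : ℝ) : E :=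
  g (min t t₀) + ∫ s in t₀..max t t₀, F s (X (s - τ₀))

theorem delayPicardMap_of_le {t : ℝ} (ht : t ≤ t₀) : delayPicardMap t₀ τ₀ F g X t = g t := by
  simp [delayPicardMap, ht]

theorem delayPicardMap_of_ge {t : ℝ} (ht : t₀ ≤ t) :
    delayPicardMap t₀ τ₀ F g X t = g t₀ + ∫ s in t₀..t, F s (X (s - τ₀)) := by
  simp [delayPicardMap, ht]

theorem delayPicardMap_congr {t : ℝ} (h : ∀ s ∈ Icc t₀ t, X (s - τ₀) = Y (s - τ₀)) :
    delayPicardMap t₀ τ₀ F g X t = delayPicardMap t₀ τ₀ F g Y t := by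
  rcases le_total t t₀ with ht | ht
  · rw [delayPicardMap_of_le ht, delayPicardMap_of_le ht]
  · rw [delayPicardMap_of_ge ht, delayPicardMap_of_ge ht]
    congr 1
    refine intervalIntegral.integral_congr fun s hs => ?_
    rw [uIcc_of_le ht] at hs
    simp only [h s hs]

theorem delayPicardMap_eqOn_Iic {c : ℝ} (h : EqOn X Y (Icc (t₀ - τ₀) c)) :
    EqOn (delayPicardMap t₀ τ₀ F g X) (delayPicardMap t₀ τ₀ F g Y) (Iic (c + τ₀)) :=
  fun t ht => delayPicardMap_congr fun s hs =>
    h ⟨by linarith [hs.1], by linarith [hs.2, show t ≤ c + τ₀ from ht]⟩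

theorem continuousOn_delayPicardMap (ht₀T₁ : t₀ ≤ T₁) (hτ₀ : 0 ≤ τ₀)
    (hF : ContinuousOn (Function.uncurry F) (Icc t₀ T₁ ×ˢ univ))
    (hg : ContinuousOn g (Icc (t₀ - τ₀) t₀)) (hX : ContinuousOn X (Icc (t₀ - τ₀) T₁)) :
    ContinuousOn (delayPicardMap t₀ τ₀ F g X) (Icc (t₀ - τ₀) T₁) := by
  have hprim : ContinuousOn (fun u => ∫ s in t₀..u, F s (X (s - τ₀))) (Icc t₀ T₁) := by
    have := intervalIntegral.continuousOn_primitive_interval' (μ := volume)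
      ((continuousOn_comp_delay hτ₀ hF hX).intervalIntegrable_of_Icc ht₀T₁) left_mem_uIcc
    rwa [uIcc_of_le ht₀T₁] at this
  refine (hg.comp (by fun_prop) fun t ht => ?_).add (hprim.comp (by fun_prop) fun t ht => ?_)
  · exact ⟨le_min ht.1 (by linarith), min_le_right _ _⟩
  · exact ⟨le_max_right _ _, max_le ht.2 ht₀T₁⟩

theorem continuousOn_delayPicardMap_iterate (ht₀T₁ : t₀ ≤ T₁) (hτ₀ : 0 ≤ τ₀)
    (hF : ContinuousOn (Function.uncurry F) (Icc t₀ T₁ ×ˢ univ))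
    (hg : ContinuousOn g (Icc (t₀ - τ₀) t₀)) (hX : ContinuousOn X (Icc (t₀ - τ₀) T₁))
    (n : ℕ) :
    ContinuousOn ((delayPicardMap t₀ τ₀ F g)^[n] X) (Icc (t₀ - τ₀) T₁) := by
  induction n with
  | zero => exact hX
  | succ n ih =>
    rw [Function.iterate_succ']
    exact continuousOn_delayPicardMap ht₀T₁ hτ₀ hF hg ih

theorem delayPicardMap_iterate_eqOn (X : ℝ → E) (n : ℕ) :
    EqOn ((delayPicardMap t₀ τ₀ F g)^[n + 2] X) ((delayPicardMap t₀ τ₀ F g)^[n + 1] X)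
      (Icc (t₀ - τ₀) (t₀ + n * τ₀)) := by
  induction n with
  | zero =>
    intro t ht
    simp only [Function.iterate_succ_apply']
    have ht₀ : t ≤ t₀ := by simpa using ht.2
    rw [delayPicardMap_of_le ht₀, delayPicardMap_of_le ht₀]
  | succ n ih =>
    intro t ht
    simp only [Function.iterate_succ_apply'] at ih ⊢
    refine delayPicardMap_eqOn_Iic ih (show t ≤ t₀ + n * τ₀ + τ₀ from ?_)
    push_cast at ht
    linarith [ht.2]

theorem exists_continuousOn_eqOn_delayPicardMap (ht₀T₁ : t₀ ≤ T₁) (hτ₀ : 0 < τ₀)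
    (hF : ContinuousOn (Function.uncurry F) (Icc t₀ T₁ ×ˢ univ))
    (hg : ContinuousOn g (Icc (t₀ - τ₀) t₀)) :
    ∃ X, ContinuousOn X (Icc (t₀ - τ₀) T₁) ∧
      EqOn X (delayPicardMap t₀ τ₀ F g X) (Icc (t₀ - τ₀) T₁) := by
  obtain ⟨N, hN⟩ := Archimedean.arch (T₁ - t₀) hτ₀
  rw [nsmul_eq_mul] at hN
  refine ⟨(delayPicardMap t₀ τ₀ F g)^[N + 1] 0,
    continuousOn_delayPicardMap_iterate ht₀T₁ hτ₀.le hF hg continuousOn_const _, fun t ht => ?_⟩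
  rw [← Function.iterate_succ_apply' (delayPicardMap t₀ τ₀ F g)]
  exact (delayPicardMap_iterate_eqOn 0 N ⟨ht.1, by linarith [ht.2]⟩).symm

theorem eqOn_of_eqOn_delayPicardMap (hτ₀ : 0 < τ₀)
    (hX : EqOn X (delayPicardMap t₀ τ₀ F g X) (Icc (t₀ - τ₀) T₁))
    (hY : EqOn Y (delayPicardMap t₀ τ₀ F g Y) (Icc (t₀ - τ₀) T₁)) :
    EqOn X Y (Icc (t₀ - τ₀) T₁) := by
  have hsteps : ∀ n : ℕ, EqOn X Y (Icc (t₀ - τ₀) (min T₁ (t₀ + n * τ₀))) := by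
    intro n
    induction n with
    | zero =>
      intro t ht
      have ht' : t ∈ Icc (t₀ - τ₀) T₁ := ⟨ht.1, ht.2.trans (min_le_left _ _)⟩
      have ht₀ : t ≤ t₀ := by simpa using ht.2.trans (min_le_right _ _)
      rw [hX ht', hY ht', delayPicardMap_of_le ht₀, delayPicardMap_of_le ht₀]
    | succ n ih =>
      intro t ht
      have ht' : t ∈ Icc (t₀ - τ₀) T₁ := ⟨ht.1, ht.2.trans (min_le_left _ _)⟩
      rw [hX ht', hY ht']
      refine delayPicardMap_eqOn_Iic ih (ht.2.trans ?_)
      push_cast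
      rw [← min_add_add_right]
      exact min_le_min (by linarith) (by linarith)
  obtain ⟨N, hN⟩ := Archimedean.arch (T₁ - t₀) hτ₀
  rw [nsmul_eq_mul] at hN
  simpa [min_eq_left (show T₁ ≤ t₀ + N * τ₀ by linarith)] using hsteps N

theorem isDelaySolution_of_eqOn_delayPicardMap [CompleteSpace E] (ht₀T₁ : t₀ ≤ T₁)
    (hτ₀ : 0 ≤ τ₀) (hF : ContinuousOn (Function.uncurry F) (Icc t₀ T₁ ×ˢ univ))
    (hX : ContinuousOn X (Icc (t₀ - τ₀) T₁))
    (hfix : EqOn X (delayPicardMap t₀ τ₀ F g X) (Icc (t₀ - τ₀) T₁)) :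
    IsDelaySolution t₀ T₁ τ₀ F g X := by
  have hsub : Icc t₀ T₁ ⊆ Icc (t₀ - τ₀) T₁ := Icc_subset_Icc_left (by linarith)
  have hFX := continuousOn_comp_delay hτ₀ hF hX
  refine ⟨hX, fun t ht => ?_, fun t ht => ?_⟩
  · have hprim : HasDerivWithinAt (fun u => g t₀ + ∫ s in t₀..u, F s (X (s - τ₀)))
        (F t (X (t - τ₀))) (Icc t₀ T₁) t :=
      haveI : Fact (t ∈ Icc t₀ T₁) := ⟨ht⟩
      (intervalIntegral.integral_hasDerivWithinAt_right
        ((hFX.mono (Icc_subset_Icc_right ht.2)).intervalIntegrable_of_Icc ht.1)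
        (hFX.stronglyMeasurableAtFilter_nhdsWithin measurableSet_Icc t)
        (hFX t ht)).const_add _
    refine hprim.congr_of_mem (fun u hu => ?_) ht
    rw [hfix (hsub hu), delayPicardMap_of_ge hu.1]
  · rw [hfix ⟨ht.1, ht.2.trans ht₀T₁⟩, delayPicardMap_of_le ht.2]

theorem IsDelaySolution.eqOn_delayPicardMap [CompleteSpace E] (hτ₀ : 0 ≤ τ₀)
    (hF : ContinuousOn (Function.uncurry F) (Icc t₀ T₁ ×ˢ univ))
    (hX : IsDelaySolution t₀ T₁ τ₀ F g X) :
    EqOn X (delayPicardMap t₀ τ₀ F g X) (Icc (t₀ - τ₀) T₁) := by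
  obtain ⟨hcont, hderiv, hinit⟩ := hX
  intro t ht
  rcases le_total t t₀ with ht₀ | ht₀
  · rw [delayPicardMap_of_le ht₀, hinit t ⟨ht.1, ht₀⟩]
  have hFX := (continuousOn_comp_delay hτ₀ hF hcont).mono (Icc_subset_Icc_right ht.2)
  have hftc : ∫ s in t₀..t, F s (X (s - τ₀)) = X t - X t₀ :=
    intervalIntegral.integral_eq_sub_of_hasDeriv_right_of_le ht₀
      (hcont.mono (Icc_subset_Icc (by linarith) ht.2))
      (fun s hs => (hderiv s ⟨hs.1.le, hs.2.le.trans ht.2⟩).mono_of_mem_nhdsWithin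
        (Icc_mem_nhdsGT_of_mem ⟨hs.1.le, hs.2.trans_le ht.2⟩))
      (hFX.intervalIntegrable_of_Icc ht₀)
  rw [delayPicardMap_of_ge ht₀, hftc, ← hinit t₀ ⟨by linarith, le_rfl⟩, add_sub_cancel]

theorem existsUnique_isDelaySolution [CompleteSpace E] (ht₀T₁ : t₀ ≤ T₁) (hτ₀ : 0 < τ₀)
    (hF : ContinuousOn (Function.uncurry F) (Icc t₀ T₁ ×ˢ univ))
    (hg : ContinuousOn g (Icc (t₀ - τ₀) t₀)) :
    ∃ X, IsDelaySolution t₀ T₁ τ₀ F g X ∧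
      ∀ Y, IsDelaySolution t₀ T₁ τ₀ F g Y → EqOn Y X (Icc (t₀ - τ₀) T₁) := by
  obtain ⟨X, hcont, hfix⟩ := exists_continuousOn_eqOn_delayPicardMap ht₀T₁ hτ₀ hF hg
  exact ⟨X, isDelaySolution_of_eqOn_delayPicardMap ht₀T₁ hτ₀.le hF hcont hfix, fun Y hY =>
    eqOn_of_eqOn_delayPicardMap hτ₀ (hY.eqOn_delayPicardMap hτ₀.le hF) hfix⟩

end DelayEquation

theorem stmt6_general {Ω : Type*} [MeasurableSpace Ω] {μ : Measure Ω} [IsProbabilityMeasure μ]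
    {p : ℝ≥0∞} [Fact (1 ≤ p)] (t₀ T₁ : ℝ) (ht₀T₁ : t₀ ≤ T₁)
    (τ₀ : ℝ) (hτ₀ : 0 < τ₀)
    (J : ℕ) (τ : Fin J → ℝ)
    (α β₀ : ℝ → ℝ) (β : Fin J → ℝ → ℝ)
    (hα : ContinuousOn α (Icc t₀ T₁)) (hβ₀ : ContinuousOn β₀ (Icc t₀ T₁))
    (hβ : ∀ j, ContinuousOn (β j) (Icc t₀ T₁))
    (Z : ℝ → Lp ℝ p μ) (hZ : ContinuousOn Z (Icc t₀ T₁))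
    (U : Fin J → ℝ → Lp ℝ p μ)
    (hU : ∀ j, ContinuousOn (U j) (Icc (t₀ - τ j) (T₁ - τ j)))
    (g : ℝ → Lp ℝ p μ) (hg : ContinuousOn g (Icc (t₀ - τ₀) t₀)) :
    ∃ X : ℝ → Lp ℝ p μ,
      (ContinuousOn X (Icc (t₀ - τ₀) T₁) ∧
        (∀ t ∈ Icc t₀ T₁, HasDerivWithinAt X
          ((Lp.const p μ (α t) : Lp ℝ p μ) + β₀ t • X (t - τ₀) +
            ∑ j, β j t • U j (t - τ j) + Z t) (Icc t₀ T₁) t) ∧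
        (∀ t ∈ Icc (t₀ - τ₀) t₀, X t = g t)) ∧
      ∀ Y : ℝ → Lp ℝ p μ,
        (ContinuousOn Y (Icc (t₀ - τ₀) T₁) ∧
          (∀ t ∈ Icc t₀ T₁, HasDerivWithinAt Y
            ((Lp.const p μ (α t) : Lp ℝ p μ) + β₀ t • Y (t - τ₀) +
              ∑ j, β j t • U j (t - τ j) + Z t) (Icc t₀ T₁) t) ∧
          (∀ t ∈ Icc (t₀ - τ₀) t₀, Y t = g t)) →
        EqOn Y X (Icc (t₀ - τ₀) T₁) := by
  have hfst : MapsTo Prod.fst (Icc t₀ T₁ ×ˢ (univ : Set (Lp ℝ p μ))) (Icc t₀ T₁) :=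
    fun q hq => hq.1
  have hconst : ContinuousOn (fun t => (Lp.const p μ (α t) : Lp ℝ p μ)) (Icc t₀ T₁) :=
    (Lp.constL p μ ℝ).continuous.comp_continuousOn hα
  have hsum : ContinuousOn (fun t => ∑ j, β j t • U j (t - τ j)) (Icc t₀ T₁) :=
    continuousOn_finsetSum _ fun j _ => (hβ j).smul ((hU j).comp (by fun_prop)
      fun t ht => ⟨by linarith [ht.1], by linarith [ht.2]⟩)
  have hF : ContinuousOn (Function.uncurry fun t (x : Lp ℝ p μ) =>
      (Lp.const p μ (α t) : Lp ℝ p μ) + β₀ t • x + ∑ j, β j t • U j (t - τ j) + Z t)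
      (Icc t₀ T₁ ×ˢ univ) :=
    (((hconst.comp continuousOn_fst hfst).add
      ((hβ₀.comp continuousOn_fst hfst).smul continuousOn_snd)).add
      (hsum.comp continuousOn_fst hfst)).add (hZ.comp continuousOn_fst hfst)
  exact existsUnique_isDelaySolution ht₀T₁ hτ₀ hF hg

/-- Existence and uniqueness (in the Lp sense) of the solution of the functional concurrent
random delay differential equation
`X′(t) = α(t) + β₀(t)X(t−τ₀) + Σ_j β_j(t)U_j(t−τ_j) + Z(t)` on `[t₀, T₁]` with
initial condition `X = g` on `[t₀ − τ₀, t₀]`, when `τ₀ > 0`, the coefficient functions are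
continuous, `Z`, the `U_j` and `g` are p-th moment continuous. A solution is p-th moment
continuous on `[t₀ − τ₀, T₁]` and p-th moment differentiable on `[t₀, T₁]` with the stated
Lp derivative. -/
theorem stmt6 {Ω : Type*} [MeasurableSpace Ω] {μ : Measure Ω} [IsProbabilityMeasure μ]
    {p : ℝ≥0∞} [Fact (1 ≤ p)] (t₀ T₁ : ℝ) (ht₀T₁ : t₀ ≤ T₁)
    (τ₀ : ℝ) (hτ₀ : 0 < τ₀)
    (J : ℕ) (τ : Fin J → ℝ) (hτ : ∀ j, 0 ≤ τ j)
    (α β₀ : ℝ → ℝ) (β : Fin J → ℝ → ℝ)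
    (hα : ContinuousOn α (Icc t₀ T₁)) (hβ₀ : ContinuousOn β₀ (Icc t₀ T₁))
    (hβ : ∀ j, ContinuousOn (β j) (Icc t₀ T₁))
    (Z : ℝ → Lp ℝ p μ) (hZ : ContinuousOn Z (Icc t₀ T₁))
    (U : Fin J → ℝ → Lp ℝ p μ)
    (hU : ∀ j, ContinuousOn (U j) (Icc (t₀ - τ j) (T₁ - τ j)))
    (g : ℝ → Lp ℝ p μ) (hg : ContinuousOn g (Icc (t₀ - τ₀) t₀)) :
    ∃ X : ℝ → Lp ℝ p μ,
      (ContinuousOn X (Icc (t₀ - τ₀) T₁) ∧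
        (∀ t ∈ Icc t₀ T₁, HasDerivWithinAt X
          ((Lp.const p μ (α t) : Lp ℝ p μ) + β₀ t • X (t - τ₀) +
            ∑ j, β j t • U j (t - τ j) + Z t) (Icc t₀ T₁) t) ∧
        (∀ t ∈ Icc (t₀ - τ₀) t₀, X t = g t)) ∧
      ∀ Y : ℝ → Lp ℝ p μ,
        (ContinuousOn Y (Icc (t₀ - τ₀) T₁) ∧
          (∀ t ∈ Icc t₀ T₁, HasDerivWithinAt Y
            ((Lp.const p μ (α t) : Lp ℝ p μ) + β₀ t • Y (t - τ₀) +
              ∑ j, β j t • U j (t - τ j) + Z t) (Icc t₀ T₁) t) ∧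
          (∀ t ∈ Icc (t₀ - τ₀) t₀, Y t = g t)) →
        EqOn Y X (Icc (t₀ - τ₀) T₁) :=
  stmt6_general t₀ T₁ ht₀T₁ τ₀ hτ₀ J τ α β₀ β hα hβ₀ hβ Z hZ U hU g hg
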